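/- Let n ≥ 1 be an integer and δ > 0. There exist a constant C > 0 and ε₀ ∈ (0, δ) such that for every ε ∈ (0, ε₀), ∫_{B_δ} (ε² + |x|²)^{−n} dx ≥ ε^{−n} (I_n − C ε^n), where I_n = ∫_{ℝ^n} (1 + |z|²)^{−n} dz. -/

import Mathlib

open MeasureTheory Real

open Module Metric

/-! Substituting `x = ε • z` shows that the integral of `(ε² + ‖x‖²)^(-n)` over the whole space
is exactly `ε^(-n) I_n`, because the integrand becomes `ε^(-2n) (1 + ‖z‖²)^(-n)` and the Jacobian
is `ε^n`. Outside `B_δ` one has `1 + ‖x‖² ≤ ((1 + δ²)/δ²) (ε² + ‖x‖²)`, so the integral over the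
complement of `B_δ` is at most `((1 + δ²)/δ²)^n I_n` for every `ε`; this is the constant `C`. -/

theorem one_add_norm_inv_smul_sq_rpow_neg {E : Type*} [NormedAddCommGroup E] [NormedSpace ℝ E]
    {ε : ℝ} (hε : 0 < ε) (s : ℝ) (x : E) :
    (1 + ‖ε⁻¹ • x‖ ^ 2) ^ (-s) = ε ^ (2 * s) * (ε ^ 2 + ‖x‖ ^ 2) ^ (-s) := by
  have hscale : 1 + ‖ε⁻¹ • x‖ ^ 2 = (ε ^ 2)⁻¹ * (ε ^ 2 + ‖x‖ ^ 2) := by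
    rw [norm_smul, norm_inv, norm_of_nonneg hε.le]
    field_simp
  rw [hscale, mul_rpow (by positivity) (by positivity), inv_rpow (by positivity),
    ← rpow_neg (by positivity), neg_neg, ← rpow_natCast, ← rpow_mul hε.le]
  norm_num

theorem sq_add_sq_rpow_neg_le_of_le {s δ t : ℝ} (hs : 0 ≤ s) (hδ : 0 < δ) (ht : δ ≤ t) (ε : ℝ) :
    (ε ^ 2 + t ^ 2) ^ (-s) ≤ ((1 + δ ^ 2) / δ ^ 2) ^ s * (1 + t ^ 2) ^ (-s) := by
  set K := (1 + δ ^ 2) / δ ^ 2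
  have hK : 0 < K := by positivity
  have hle : 1 + t ^ 2 ≤ K * (ε ^ 2 + t ^ 2) := by
    rw [div_mul_eq_mul_div, le_div_iff₀ (by positivity)]
    nlinarith [sq_nonneg ε, mul_le_mul ht ht hδ.le (hδ.le.trans ht), sq_nonneg δ]
  calc (ε ^ 2 + t ^ 2) ^ (-s) = K ^ s * (K * (ε ^ 2 + t ^ 2)) ^ (-s) := by
        rw [mul_rpow hK.le (by positivity), ← mul_assoc, ← rpow_add hK, add_neg_cancel,
          rpow_zero, one_mul]
    _ ≤ K ^ s * (1 + t ^ 2) ^ (-s) :=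
        mul_le_mul_of_nonneg_left
          (rpow_le_rpow_of_nonpos (by positivity) hle (neg_nonpos.2 hs)) (by positivity)

section HaarMeasure

variable {E : Type*} [NormedAddCommGroup E] [NormedSpace ℝ E] [FiniteDimensional ℝ E]
  [MeasurableSpace E] [BorelSpace E] (μ : Measure E) [μ.IsAddHaarMeasure] {s : ℝ}

theorem integrable_one_add_norm_sq_rpow_neg (hs : (finrank ℝ E : ℝ) < 2 * s) :
    Integrable (fun x : E ↦ (1 + ‖x‖ ^ 2) ^ (-s)) μ := by
  convert integrable_rpow_neg_one_add_norm_sq (μ := μ) hs using 3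
  ring

theorem integrable_sq_add_norm_sq_rpow_neg (hs : (finrank ℝ E : ℝ) < 2 * s) {ε : ℝ}
    (hε : 0 < ε) : Integrable (fun x : E ↦ (ε ^ 2 + ‖x‖ ^ 2) ^ (-s)) μ := by
  have h := ((integrable_one_add_norm_sq_rpow_neg μ hs).comp_smul (inv_ne_zero hε.ne')).const_mul
    (ε ^ (2 * s))⁻¹
  refine h.congr (.of_forall fun x ↦ ?_)
  simp only [one_add_norm_inv_smul_sq_rpow_neg hε]
  field_simp

theorem integral_one_add_norm_sq_rpow_neg_pos (hs : (finrank ℝ E : ℝ) < 2 * s) :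
    0 < ∫ x, (1 + ‖x‖ ^ 2) ^ (-s) ∂μ := by
  have hsupp : Function.support (fun x : E ↦ (1 + ‖x‖ ^ 2) ^ (-s)) = Set.univ :=
    Set.eq_univ_of_forall fun x ↦ (rpow_pos_of_pos (by positivity) _).ne'
  rw [integral_pos_iff_support_of_nonneg (fun x ↦ by positivity)
    (integrable_one_add_norm_sq_rpow_neg μ hs), hsupp]
  exact Measure.measure_univ_pos.2 (NeZero.ne μ)

theorem integral_sq_add_norm_sq_rpow_neg {ε : ℝ} (hε : 0 < ε) :
    ∫ x, (ε ^ 2 + ‖x‖ ^ 2) ^ (-s) ∂μ =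
      ε ^ ((finrank ℝ E : ℝ) - 2 * s) * ∫ x, (1 + ‖x‖ ^ 2) ^ (-s) ∂μ := by
  have h := Measure.integral_comp_inv_smul_of_nonneg μ (fun x : E ↦ (1 + ‖x‖ ^ 2) ^ (-s)) hε.le
  simp only [one_add_norm_inv_smul_sq_rpow_neg hε, integral_const_mul, smul_eq_mul] at h
  rw [rpow_sub hε, rpow_natCast, div_mul_eq_mul_div, ← h]
  field_simp

theorem setIntegral_compl_ball_sq_add_norm_sq_rpow_neg_le (hs : (finrank ℝ E : ℝ) < 2 * s)
    {δ : ℝ} (hδ : 0 < δ) (ε : ℝ) :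
    ∫ x in (ball 0 δ)ᶜ, (ε ^ 2 + ‖x‖ ^ 2) ^ (-s) ∂μ ≤
      ((1 + δ ^ 2) / δ ^ 2) ^ s * ∫ x, (1 + ‖x‖ ^ 2) ^ (-s) ∂μ := by
  have hs₀ : 0 ≤ s := by linarith [(finrank ℝ E).cast_nonneg (α := ℝ)]
  have hint := integrable_one_add_norm_sq_rpow_neg μ hs
  calc ∫ x in (ball 0 δ)ᶜ, (ε ^ 2 + ‖x‖ ^ 2) ^ (-s) ∂μ
      ≤ ∫ x in (ball 0 δ)ᶜ, ((1 + δ ^ 2) / δ ^ 2) ^ s * (1 + ‖x‖ ^ 2) ^ (-s) ∂μ := by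
        refine integral_mono_of_nonneg (.of_forall fun x ↦ by positivity)
          (hint.const_mul _).integrableOn ?_
        refine (ae_restrict_iff' measurableSet_ball.compl).2 (.of_forall fun x hx ↦ ?_)
        exact sq_add_sq_rpow_neg_le_of_le hs₀ hδ (by simpa using hx) ε
    _ ≤ ((1 + δ ^ 2) / δ ^ 2) ^ s * ∫ x, (1 + ‖x‖ ^ 2) ^ (-s) ∂μ := by
        rw [integral_const_mul]
        exact mul_le_mul_of_nonneg_left
          (setIntegral_le_integral hint (.of_forall fun x ↦ by positivity)) (by positivity)

end HaarMeasure

theorem stmt_19 (n : ℕ) (hn : 1 ≤ n) (δ : ℝ) (hδ : 0 < δ) :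
    ∃ C : ℝ, 0 < C ∧ ∃ ε₀ ∈ Set.Ioo (0:ℝ) δ, ∀ ε ∈ Set.Ioo (0:ℝ) ε₀,
      (∫ x in Metric.ball (0 : EuclideanSpace ℝ (Fin n)) δ,
          (ε ^ 2 + ‖x‖ ^ 2) ^ (-(n : ℝ))) ≥
        ε ^ (-(n : ℝ)) *
          ((∫ z : EuclideanSpace ℝ (Fin n), (1 + ‖z‖ ^ 2) ^ (-(n : ℝ))) - C * ε ^ n) := by
  have hdim : (finrank ℝ (EuclideanSpace ℝ (Fin n)) : ℝ) < 2 * n := by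
    rw [finrank_euclideanSpace_fin]
    exact_mod_cast (by omega : n < 2 * n)
  have hI := integral_one_add_norm_sq_rpow_neg_pos volume hdim
  refine ⟨((1 + δ ^ 2) / δ ^ 2) ^ (n : ℝ) * ∫ z : EuclideanSpace ℝ (Fin n),
    (1 + ‖z‖ ^ 2) ^ (-(n : ℝ)), mul_pos (by positivity) hI, δ / 2, ⟨by positivity, by linarith⟩,
    fun ε ⟨hε, _⟩ ↦ ?_⟩
  have hsplit := integral_add_compl (measurableSet_ball (x := 0) (ε := δ))
    (integrable_sq_add_norm_sq_rpow_neg volume hdim hε)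
  have htail := setIntegral_compl_ball_sq_add_norm_sq_rpow_neg_le volume hdim hδ ε
  rw [integral_sq_add_norm_sq_rpow_neg volume hε, finrank_euclideanSpace_fin,
    show (n : ℝ) - 2 * n = -n by ring] at hsplit
  have hcancel : ε ^ (-(n : ℝ)) * ε ^ n = 1 := by
    rw [rpow_neg hε.le, rpow_natCast, inv_mul_cancel₀ (by positivity)]
  linear_combination htail - hsplit -
    (((1 + δ ^ 2) / δ ^ 2) ^ (n : ℝ) * ∫ z : EuclideanSpace ℝ (Fin n),
      (1 + ‖z‖ ^ 2) ^ (-(n : ℝ))) * hcancel
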